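/- Let (X, d) be a metric space, let φ be a time-varying flow on X with equilibrium point x⋆, and let L > 0. Assume: (i) d(φ(τ; t, x), x⋆) ≥ e^{−L(τ−t)}·d(x, x⋆) for all τ ≥ t and all x ∈ X; (ii) there is a class 𝒦𝓛 function β with d(φ(τ; t, x), x⋆) ≤ β(d(x, x⋆), τ − t) for all τ ≥ t ≥ 0 and all x ∈ X. Let G be a class 𝒦 function such that for every r ≥ 0 the integral α₂(r) := ∫₀^∞ G(β(r, s)) ds is finite. Define V(t, x) = ∫ₜ^∞ G(d(φ(τ; t, x), x⋆)) dτ. Then V(t, x) is finite for every t ≥ 0 and x ∈ X, and G(e^{−L}·d(x, x⋆)) ≤ V(t, x) ≤ α₂(d(x, x⋆)) for all t ≥ 0 and x ∈ X; in particular, the lower bound r ↦ G(e^{−L}·r) is a class 𝒦 function. -/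

import Mathlib

/-- A class 𝒦 function: continuous, strictly increasing on `[0, ∞)`,
vanishing at `0`, and nonnegative on `[0, ∞)`. -/
def IsClassK (α : ℝ → ℝ) : Prop :=
  ContinuousOn α (Set.Ici 0) ∧ StrictMonoOn α (Set.Ici 0) ∧ α 0 = 0 ∧
    ∀ r, 0 ≤ r → 0 ≤ α r

/-- A class 𝒦𝓛 function: continuous on `[0,∞) × [0,∞)`, class 𝒦 in the first
argument for each fixed second argument, and decreasing to `0` in the second
argument for each fixed first argument. -/
def IsClassKL (β : ℝ → ℝ → ℝ) : Prop :=
  ContinuousOn (Function.uncurry β) (Set.Ici 0 ×ˢ Set.Ici 0) ∧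
  (∀ s, 0 ≤ s → IsClassK fun r => β r s) ∧
  (∀ r, 0 ≤ r → AntitoneOn (fun s => β r s) (Set.Ici 0) ∧
    Filter.Tendsto (fun s => β r s) Filter.atTop (nhds 0))

/-- A time-varying flow `φ t t₀ x₀ = φ(t; t₀, x₀)` on a metric space:
initial condition, semigroup property, and continuity in time. -/
def IsFlow {X : Type*} [MetricSpace X] (φ : ℝ → ℝ → X → X) : Prop :=
  (∀ t₀ x₀, φ t₀ t₀ x₀ = x₀) ∧
  (∀ t s t₀ x₀, t₀ ≤ s → s ≤ t → φ t s (φ s t₀ x₀) = φ t t₀ x₀) ∧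
  (∀ t₀ x₀, Continuous fun t => φ t t₀ x₀)

/-- `xs` is an equilibrium point of the flow `φ`: `φ(t; t₀, x⋆) = x⋆` for all
`t ≥ t₀ ≥ 0`. -/
def IsEquilibrium {X : Type*} [MetricSpace X] (φ : ℝ → ℝ → X → X) (xs : X) : Prop :=
  ∀ t₀ t, 0 ≤ t₀ → t₀ ≤ t → φ t t₀ xs = xs

/-!
Along a trajectory the integrand `G(d(φ(τ; t, x), x⋆))` is squeezed between two bounds. UGAS
dominates it by `G(β(d(x, x⋆), τ - t))`, whose integral over `τ > t` is `α₂(d(x, x⋆))` after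
the shift `s = τ - t`; this gives finiteness and the upper bound. On the unit window
`t < τ ≤ t + 1` the exponential lower estimate keeps it above `G(e^{-L} d(x, x⋆))`, and since
the integrand is nonnegative the whole integral dominates its integral over that window.
-/

open MeasureTheory Set

theorem IsClassK.monotoneOn {G : ℝ → ℝ} (hG : IsClassK G) : MonotoneOn G (Ici 0) :=
  hG.2.1.monotoneOn

theorem IsClassK.comp_const_mul {G : ℝ → ℝ} (hG : IsClassK G) {c : ℝ} (hc : 0 < c) :
    IsClassK fun r => G (c * r) := by
  obtain ⟨hcont, hmono, hzero, hnonneg⟩ := hG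
  have hmaps : MapsTo (fun r => c * r) (Ici 0) (Ici 0) := fun r hr =>
    mul_nonneg hc.le hr
  refine ⟨hcont.comp (continuousOn_const.mul continuousOn_id) hmaps, ?_, by simp [hzero],
    fun r hr => hnonneg _ (hmaps hr)⟩
  exact hmono.comp ((strictMono_mul_left_of_pos hc).strictMonoOn _) hmaps

theorem integrableOn_Ioi_comp_sub {E : Type*} [NormedAddCommGroup E] {g : ℝ → E} {t : ℝ}
    (hg : IntegrableOn g (Ioi 0)) : IntegrableOn (fun τ => g (τ - t)) (Ioi t) := by
  have := ((measurePreserving_sub_right volume t).integrableOn_comp_preimage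
    (measurableEmbedding_subRight t) (s := Ioi 0)).2 hg
  rwa [preimage_sub_const_Ioi, zero_add] at this

theorem setIntegral_Ioi_comp_sub {E : Type*} [NormedAddCommGroup E] [NormedSpace ℝ E]
    (g : ℝ → E) (t : ℝ) : ∫ τ in Ioi t, g (τ - t) = ∫ s in Ioi 0, g s := by
  have := (measurePreserving_sub_right volume t).setIntegral_preimage_emb
    (measurableEmbedding_subRight t) g (Ioi 0)
  rwa [preimage_sub_const_Ioi, zero_add] at this

theorem IntegrableOn.of_nonneg_of_le {α : Type*} [MeasurableSpace α] {μ : Measure α}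
    {f g : α → ℝ} {s : Set α} (hs : MeasurableSet s) (hg : IntegrableOn g s μ)
    (hf : AEStronglyMeasurable f (μ.restrict s)) (hf_nonneg : ∀ x ∈ s, 0 ≤ f x)
    (hfg : ∀ x ∈ s, f x ≤ g x) : IntegrableOn f s μ :=
  hg.mono' hf <| (ae_restrict_iff' hs).2 <| .of_forall fun x hx => by
    rw [Real.norm_of_nonneg (hf_nonneg x hx)]
    exact hfg x hx

theorem le_setIntegral_Ioi_of_le_on_Ioc {f : ℝ → ℝ} {t c : ℝ} (hf : IntegrableOn f (Ioi t))
    (hf_nonneg : ∀ τ ∈ Ioi t, 0 ≤ f τ) (hc : ∀ τ ∈ Ioc t (t + 1), c ≤ f τ) :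
    c ≤ ∫ τ in Ioi t, f τ :=
  calc c = ∫ _ in Ioc t (t + 1), c := by simp
    _ ≤ ∫ τ in Ioc t (t + 1), f τ :=
      setIntegral_mono_on (integrableOn_const (by simp)) (hf.mono_set Ioc_subset_Ioi_self)
        measurableSet_Ioc hc
    _ ≤ ∫ τ in Ioi t, f τ :=
      setIntegral_mono_set hf ((ae_restrict_iff' measurableSet_Ioi).2 (.of_forall hf_nonneg))
        Ioc_subset_Ioi_self.eventuallyLE

theorem converse_ugas_bounds_general
    {X : Type*} [MetricSpace X]
    (φ : ℝ → ℝ → X → X) (xs : X)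
    (hflow : IsFlow φ)
    (L : ℝ) (hL : 0 < L)
    (hlower : ∀ t τ x, t ≤ τ →
      Real.exp (-L * (τ - t)) * dist x xs ≤ dist (φ τ t x) xs)
    (β : ℝ → ℝ → ℝ)
    (hUGAS : ∀ t τ x, 0 ≤ t → t ≤ τ →
      dist (φ τ t x) xs ≤ β (dist x xs) (τ - t))
    (G : ℝ → ℝ) (hG : IsClassK G)
    (hGint : ∀ r, 0 ≤ r →
      MeasureTheory.IntegrableOn (fun s => G (β r s)) (Set.Ioi 0)) :
    ∀ t x, 0 ≤ t →
      MeasureTheory.IntegrableOn (fun τ => G (dist (φ τ t x) xs)) (Set.Ioi t) ∧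
      G (Real.exp (-L) * dist x xs)
        ≤ (∫ τ in Set.Ioi t, G (dist (φ τ t x) xs)) ∧
      (∫ τ in Set.Ioi t, G (dist (φ τ t x) xs))
        ≤ (∫ s in Set.Ioi (0 : ℝ), G (β (dist x xs) s)) ∧
      IsClassK (fun r => G (Real.exp (-L) * r)) := by
  intro t x ht
  set r := dist x xs
  have hcont : Continuous fun τ => G (dist (φ τ t x) xs) :=
    continuousOn_univ.1 <| hG.1.comp ((hflow.2.2 t x).dist continuous_const).continuousOn
      fun _ _ => dist_nonneg
  have hdom : ∀ τ ∈ Ioi t, G (dist (φ τ t x) xs) ≤ G (β r (τ - t)) := fun τ hτ =>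
    have hle := hUGAS t τ x ht (le_of_lt hτ)
    hG.monotoneOn dist_nonneg (dist_nonneg.trans hle) hle
  have hshift : IntegrableOn (fun τ => G (β r (τ - t))) (Ioi t) :=
    integrableOn_Ioi_comp_sub (hGint r dist_nonneg)
  have hnonneg : ∀ τ ∈ Ioi t, 0 ≤ G (dist (φ τ t x) xs) := fun _ _ => hG.2.2.2 _ dist_nonneg
  have hint : IntegrableOn (fun τ => G (dist (φ τ t x) xs)) (Ioi t) :=
    IntegrableOn.of_nonneg_of_le measurableSet_Ioi hshift hcont.aestronglyMeasurable hnonneg hdom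
  have hwindow : ∀ τ ∈ Ioc t (t + 1), G (Real.exp (-L) * r) ≤ G (dist (φ τ t x) xs) := by
    intro τ ⟨htτ, hτ1⟩
    have hexp : Real.exp (-L) ≤ Real.exp (-L * (τ - t)) := Real.exp_le_exp.2 (by nlinarith)
    exact hG.monotoneOn (mul_nonneg (Real.exp_pos _).le dist_nonneg) dist_nonneg
      ((mul_le_mul_of_nonneg_right hexp dist_nonneg).trans (hlower t τ x htτ.le))
  refine ⟨hint, le_setIntegral_Ioi_of_le_on_Ioc hint hnonneg hwindow,
    ?_, hG.comp_const_mul (Real.exp_pos _)⟩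
  calc ∫ τ in Ioi t, G (dist (φ τ t x) xs) ≤ ∫ τ in Ioi t, G (β r (τ - t)) :=
        setIntegral_mono_on hint hshift measurableSet_Ioi hdom
    _ = ∫ s in Ioi 0, G (β r s) := setIntegral_Ioi_comp_sub (fun s => G (β r s)) t

/-- the bound part (Item 1) of the converse Lyapunov theorem for
UGAS systems. For `V(t, x) = ∫ₜ^∞ G(d(φ(τ; t, x), x⋆)) dτ` with `G` supplied by
Massera's lemma, `V` is finite and sandwiched: `G(e^{−L}·d(x,x⋆)) ≤ V(t,x) ≤
α₂(d(x,x⋆))` where `α₂(r) = ∫₀^∞ G(β(r, s)) ds`, and the lower bound is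
class 𝒦. -/
theorem converse_ugas_bounds
    {X : Type*} [MetricSpace X]
    (φ : ℝ → ℝ → X → X) (xs : X)
    (hflow : IsFlow φ) (heq : IsEquilibrium φ xs)
    (L : ℝ) (hL : 0 < L)
    (hlower : ∀ t τ x, t ≤ τ →
      Real.exp (-L * (τ - t)) * dist x xs ≤ dist (φ τ t x) xs)
    (β : ℝ → ℝ → ℝ) (hβ : IsClassKL β)
    (hUGAS : ∀ t τ x, 0 ≤ t → t ≤ τ →
      dist (φ τ t x) xs ≤ β (dist x xs) (τ - t))
    (G : ℝ → ℝ) (hG : IsClassK G)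
    (hGint : ∀ r, 0 ≤ r →
      MeasureTheory.IntegrableOn (fun s => G (β r s)) (Set.Ioi 0)) :
    ∀ t x, 0 ≤ t →
      MeasureTheory.IntegrableOn (fun τ => G (dist (φ τ t x) xs)) (Set.Ioi t) ∧
      G (Real.exp (-L) * dist x xs)
        ≤ (∫ τ in Set.Ioi t, G (dist (φ τ t x) xs)) ∧
      (∫ τ in Set.Ioi t, G (dist (φ τ t x) xs))
        ≤ (∫ s in Set.Ioi (0 : ℝ), G (β (dist x xs) s)) ∧
      IsClassK (fun r => G (Real.exp (-L) * r)) :=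
  converse_ugas_bounds_general φ xs hflow L hL hlower β hUGAS G hG hGint
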